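/- arXiv:1111.3187 — 3 statements merged into one kernel-verified Lean document; each statement's English description precedes it below -/
import Mathlib

section
/- Let g : [0,1] → ℝ be continuous with g ≥ k > 0, and G(x) = ∫_0^x g(s) ds. Then for each fixed x ∈ (0,1], the ratio (∫_0^x e^{G(s)/h} ds) / (h·e^{G(x)/h}) converges to 1/g(x) as h → 0⁺. -/
/-!
Write the ratio as `h⁻¹ ∫ₐᵇ exp ((φ s - φ b) / h) ds`. For a linear phase `c (s - b)` on
`[l, b]` the integral is `(h / c) (1 - exp (-c (b - l) / h))`, so the ratio tends to `c⁻¹`.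
Since `φ` has left derivative `c` at `b`, on a short interval `[l, b]` the phase `φ s - φ b`
lies between the linear phases of slopes `c' < c < c''`, which bounds that part of the ratio
between `c''⁻¹` and `c'⁻¹` in the limit. On `[a, l]` we have `φ - φ b ≤ -m < 0`, so that part
is `O(h⁻¹ exp (-m / h))`, which tends to `0`.
-/

open Real MeasureTheory intervalIntegral Filter Set Topology

lemma tendsto_exp_neg_div_nhdsGT_zero {m : ℝ} (hm : 0 < m) :
    Tendsto (fun h => exp (-m / h)) (𝓝[>] 0) (𝓝 0) := by
  simpa only [div_eq_mul_inv, Function.comp_def] using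
    tendsto_exp_atBot.comp (tendsto_inv_nhdsGT_zero.const_mul_atTop_of_neg (neg_neg_of_pos hm))

lemma tendsto_exp_neg_div_div_nhdsGT_zero {m : ℝ} (hm : 0 < m) :
    Tendsto (fun h => exp (-m / h) / h) (𝓝[>] 0) (𝓝 0) := by
  have hinv : Tendsto (fun h : ℝ => m / h) (𝓝[>] 0) atTop := by
    simpa only [div_eq_mul_inv] using tendsto_inv_nhdsGT_zero.const_mul_atTop hm
  have hlim := ((tendsto_pow_mul_exp_neg_atTop_nhds_zero 1).comp hinv).div_const m
  rw [zero_div] at hlim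
  refine hlim.congr' ?_
  filter_upwards [self_mem_nhdsWithin] with h (hh : 0 < h)
  simp only [Function.comp_apply, pow_one, neg_div]
  field_simp

lemma integral_exp_mul_sub_div (l b : ℝ) {c h : ℝ} (hc : 0 < c) (hh : 0 < h) :
    ∫ s in l..b, exp (c * (s - b) / h) = h / c * (1 - exp (-(c * (b - l)) / h)) := by
  have hch : c / h ≠ 0 := (div_pos hc hh).ne'
  calc ∫ s in l..b, exp (c * (s - b) / h)
      = ∫ s in l..b, exp (c / h * s - c / h * b) := by congr 1; ext s; ring_nf
    _ = (c / h)⁻¹ * (exp 0 - exp (c / h * l - c / h * b)) := by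
        rw [integral_comp_mul_sub (fun t => exp t) hch, integral_exp, sub_self, smul_eq_mul]
    _ = h / c * (1 - exp (-(c * (b - l)) / h)) := by
        rw [exp_zero, inv_div]; congr 3; ring

theorem tendsto_integral_exp_mul_sub_div {l b c : ℝ} (hlb : l < b) (hc : 0 < c) :
    Tendsto (fun h => (∫ s in l..b, exp (c * (s - b) / h)) / h) (𝓝[>] 0) (𝓝 c⁻¹) := by
  have hlim :=
    ((tendsto_exp_neg_div_nhdsGT_zero (mul_pos hc (sub_pos.2 hlb))).const_sub 1).div_const c
  rw [sub_zero, one_div] at hlim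
  refine hlim.congr' ?_
  filter_upwards [self_mem_nhdsWithin] with h (hh : 0 < h)
  rw [integral_exp_mul_sub_div l b hc hh]
  field_simp

lemma hasDerivWithinAt_integral_Iio_of_continuousOn {f : ℝ → ℝ} {a b : ℝ} (hab : a < b)
    (hf : ContinuousOn f (Icc a b)) :
    HasDerivWithinAt (fun u => ∫ t in a..u, f t) (f b) (Iio b) b := by
  have hnhds : 𝓝[Icc a b] b = 𝓝[≤] b := nhdsWithin_Icc_eq_nhdsLE hab
  refine (integral_hasDerivWithinAt_right (s := Iic b) (t := Iic b)
    (hf.intervalIntegrable_of_Icc hab.le) ?_ ?_).mono Iio_subset_Iic_self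
  · rw [← hnhds]
    exact hf.stronglyMeasurableAtFilter_nhdsWithin measurableSet_Icc b
  · rw [ContinuousWithinAt, ← hnhds]
    exact hf b (right_mem_Icc.2 hab.le)

lemma strictMonoOn_integral_of_pos {f : ℝ → ℝ} {a b : ℝ} (hf : ContinuousOn f (Icc a b))
    (hpos : ∀ t ∈ Icc a b, 0 < f t) : StrictMonoOn (fun u => ∫ t in a..u, f t) (Icc a b) := by
  intro u hu v hv huv
  have hint : ∀ w ∈ Icc a b, IntervalIntegrable f volume a w := fun w hw =>
    (hf.mono (Icc_subset_Icc_right hw.2)).intervalIntegrable_of_Icc hw.1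
  rw [← sub_pos, integral_interval_sub_left (hint v hv) (hint u hu)]
  exact intervalIntegral_pos_of_pos_on
    ((hf.mono (Icc_subset_Icc hu.1 hv.2)).intervalIntegrable_of_Icc huv.le)
    (fun t ht => hpos t ⟨hu.1.trans ht.1.le, ht.2.le.trans hv.2⟩) huv

section

variable {φ : ℝ → ℝ} {a b c : ℝ}

lemma eventually_sub_lt_mul_sub_of_hasDerivWithinAt_Iio (hφ : HasDerivWithinAt φ c (Iio b) b)
    {c' : ℝ} (hc' : c' < c) : ∀ᶠ s in 𝓝[<] b, φ s - φ b < c' * (s - b) := by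
  have hslope := (hasDerivWithinAt_iff_tendsto_slope' self_notMem_Iio).1 hφ
  filter_upwards [hslope.eventually (lt_mem_nhds hc'), self_mem_nhdsWithin] with s hs (hsb : s < b)
  rwa [slope_def_field, lt_div_iff_of_neg (sub_neg.2 hsb)] at hs

lemma eventually_mul_sub_lt_sub_of_hasDerivWithinAt_Iio (hφ : HasDerivWithinAt φ c (Iio b) b)
    {c' : ℝ} (hc' : c < c') : ∀ᶠ s in 𝓝[<] b, c' * (s - b) < φ s - φ b := by
  have hslope := (hasDerivWithinAt_iff_tendsto_slope' self_notMem_Iio).1 hφ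
  filter_upwards [hslope.eventually (gt_mem_nhds hc'), self_mem_nhdsWithin] with s hs (hsb : s < b)
  rwa [slope_def_field, div_lt_iff_of_neg (sub_neg.2 hsb)] at hs

lemma intervalIntegrable_exp_sub_div (hφ : ContinuousOn φ (Icc a b)) (y h : ℝ) {u v : ℝ}
    (hu : u ∈ Icc a b) (hv : v ∈ Icc a b) :
    IntervalIntegrable (fun s => exp ((φ s - y) / h)) volume u v :=
  ((continuous_exp.comp_continuousOn ((hφ.sub continuousOn_const).div_const h)).mono
    (uIcc_subset_Icc hu hv)).intervalIntegrable

lemma tendsto_integral_exp_sub_div_of_lt {l : ℝ} (hal : a ≤ l) (hφ : ContinuousOn φ (Icc a l))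
    (hlt : ∀ s ∈ Icc a l, φ s < φ b) :
    Tendsto (fun h => (∫ s in a..l, exp ((φ s - φ b) / h)) / h) (𝓝[>] 0) (𝓝 0) := by
  obtain ⟨s₀, hs₀, hmin⟩ :=
    isCompact_Icc.exists_isMinOn (nonempty_Icc.2 hal) (continuousOn_const.sub hφ)
  set m := φ b - φ s₀
  have hm : 0 < m := sub_pos.2 (hlt s₀ hs₀)
  have hbound := (tendsto_exp_neg_div_div_nhdsGT_zero hm).const_mul (l - a)
  rw [mul_zero] at hbound
  refine tendsto_of_tendsto_of_tendsto_of_le_of_le' tendsto_const_nhds hbound ?_ ?_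
  all_goals filter_upwards [self_mem_nhdsWithin] with h (hh : 0 < h)
  · exact div_nonneg (integral_nonneg hal fun s _ => (exp_pos _).le) hh.le
  · have hmono : ∫ s in a..l, exp ((φ s - φ b) / h) ≤ ∫ _ in a..l, exp (-m / h) := by
      refine integral_mono_on hal (intervalIntegrable_exp_sub_div hφ _ h
        (left_mem_Icc.2 hal) (right_mem_Icc.2 hal)) intervalIntegrable_const fun s hs => ?_
      have : m ≤ φ b - φ s := hmin hs
      gcongr
      linarith
    rw [intervalIntegral.integral_const, smul_eq_mul] at hmono
    rw [mul_div_assoc']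
    gcongr

lemma eventually_lt_integral_exp_sub_div (hab : a < b) (hφ : ContinuousOn φ (Icc a b))
    (hc : 0 < c) (hφ' : HasDerivWithinAt φ c (Iio b) b) {y : ℝ} (hy : y < c⁻¹) :
    ∀ᶠ h in 𝓝[>] 0, y < (∫ s in a..b, exp ((φ s - φ b) / h)) / h := by
  obtain ⟨c', hyc', hcc'⟩ : ∃ c', y < c'⁻¹ ∧ c < c' := by
    refine Eventually.exists (f := 𝓝[>] c) ?_
    filter_upwards [((tendsto_inv₀ hc.ne').mono_left nhdsWithin_le_nhds).eventually
      (lt_mem_nhds hy), self_mem_nhdsWithin] with t ht htc using ⟨ht, htc⟩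
  obtain ⟨l, ⟨hal, hlb⟩, hl⟩ := (mem_nhdsLT_iff_exists_mem_Ico_Ioo_subset hab).1
    (eventually_mul_sub_lt_sub_of_hasDerivWithinAt_Iio hφ' hcc')
  have hlI : l ∈ Icc a b := ⟨hal, hlb.le⟩
  have hbI : b ∈ Icc a b := right_mem_Icc.2 hab.le
  filter_upwards [(tendsto_integral_exp_mul_sub_div hlb (hc.trans hcc')).eventually
    (lt_mem_nhds hyc'), self_mem_nhdsWithin] with h hlow (hh : 0 < h)
  calc y < (∫ s in l..b, exp (c' * (s - b) / h)) / h := hlow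
    _ ≤ (∫ s in l..b, exp ((φ s - φ b) / h)) / h := by
      gcongr
      refine integral_mono_on_of_le_Ioo hlb.le (Continuous.intervalIntegrable (by fun_prop) _ _)
        (intervalIntegrable_exp_sub_div hφ _ h hlI hbI) fun s hs => ?_
      gcongr
      exact (hl hs).le
    _ ≤ (∫ s in a..b, exp ((φ s - φ b) / h)) / h := by
      gcongr
      exact integral_mono_interval hal hlb.le le_rfl (ae_of_all _ fun s => (exp_pos _).le)
        (intervalIntegrable_exp_sub_div hφ _ h (left_mem_Icc.2 hab.le) hbI)

lemma eventually_integral_exp_sub_div_lt (hab : a < b) (hφ : ContinuousOn φ (Icc a b))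
    (hlt : ∀ s ∈ Ico a b, φ s < φ b) (hc : 0 < c) (hφ' : HasDerivWithinAt φ c (Iio b) b)
    {y : ℝ} (hy : c⁻¹ < y) :
    ∀ᶠ h in 𝓝[>] 0, (∫ s in a..b, exp ((φ s - φ b) / h)) / h < y := by
  obtain ⟨c', hyc', hc'c, hc'⟩ : ∃ c', c'⁻¹ < y ∧ c' < c ∧ 0 < c' := by
    refine Eventually.exists (f := 𝓝[<] c) ?_
    filter_upwards [((tendsto_inv₀ hc.ne').mono_left nhdsWithin_le_nhds).eventually
      (gt_mem_nhds hy), self_mem_nhdsWithin, nhdsWithin_le_nhds (lt_mem_nhds hc)]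
      with t ht htc ht0 using ⟨ht, htc, ht0⟩
  obtain ⟨l, ⟨hal, hlb⟩, hl⟩ := (mem_nhdsLT_iff_exists_mem_Ico_Ioo_subset hab).1
    (eventually_sub_lt_mul_sub_of_hasDerivWithinAt_Iio hφ' hc'c)
  have hlI : l ∈ Icc a b := ⟨hal, hlb.le⟩
  have hbI : b ∈ Icc a b := right_mem_Icc.2 hab.le
  have htail := tendsto_integral_exp_sub_div_of_lt hal (hφ.mono (Icc_subset_Icc_right hlb.le))
    fun s hs => hlt s ⟨hs.1, hs.2.trans_lt hlb⟩
  have hbound := htail.add (tendsto_integral_exp_mul_sub_div hlb hc')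
  rw [zero_add] at hbound
  filter_upwards [hbound.eventually (gt_mem_nhds hyc'), self_mem_nhdsWithin]
    with h hup (hh : 0 < h)
  refine lt_of_le_of_lt ?_ hup
  rw [← integral_add_adjacent_intervals
    (intervalIntegrable_exp_sub_div hφ _ h (left_mem_Icc.2 hab.le) hlI)
    (intervalIntegrable_exp_sub_div hφ _ h hlI hbI), add_div]
  gcongr
  refine integral_mono_on_of_le_Ioo hlb.le (intervalIntegrable_exp_sub_div hφ _ h hlI hbI)
    ((by fun_prop : Continuous fun s => exp (c' * (s - b) / h)).intervalIntegrable _ _)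
    fun s hs => ?_
  gcongr
  exact (hl hs).le

lemma integral_exp_div_div_mul_exp_div (f : ℝ → ℝ) (a b y h : ℝ) :
    (∫ s in a..b, exp (f s / h)) / (h * exp (y / h)) =
      (∫ s in a..b, exp ((f s - y) / h)) / h := by
  simp only [sub_div, exp_sub, intervalIntegral.integral_div]
  ring

theorem tendsto_integral_exp_div_div_mul_exp_div (hab : a < b) (hφ : ContinuousOn φ (Icc a b))
    (hlt : ∀ s ∈ Ico a b, φ s < φ b) (hc : 0 < c) (hφ' : HasDerivWithinAt φ c (Iio b) b) :
    Tendsto (fun h => (∫ s in a..b, exp (φ s / h)) / (h * exp (φ b / h))) (𝓝[>] 0)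
      (𝓝 c⁻¹) := by
  simp only [integral_exp_div_div_mul_exp_div]
  exact tendsto_order.2 ⟨fun y hy => eventually_lt_integral_exp_sub_div hab hφ hc hφ' hy,
    fun y hy => eventually_integral_exp_sub_div_lt hab hφ hlt hc hφ' hy⟩

end

/-- Laplace method at the right endpoint: for G(x) = ∫₀ˣ g with g ≥ k > 0
continuous, (∫₀ˣ e^{G(s)/h} ds)/(h e^{G(x)/h}) → 1/g(x) as h → 0⁺. -/
theorem stmt6 (g : ℝ → ℝ) (k : ℝ) (hk : 0 < k)
    (hg : ContinuousOn g (Set.Icc 0 1)) (hgk : ∀ x ∈ Set.Icc (0:ℝ) 1, k ≤ g x)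
    (G : ℝ → ℝ) (hG : ∀ x, G x = ∫ s in (0:ℝ)..x, g s)
    (x : ℝ) (hx : x ∈ Set.Ioc (0:ℝ) 1) :
    Tendsto (fun h : ℝ => (∫ s in (0:ℝ)..x, Real.exp (G s / h)) / (h * Real.exp (G x / h)))
      (nhdsWithin 0 (Set.Ioi 0)) (nhds (1 / g x)) := by
  obtain rfl : G = fun u => ∫ s in (0:ℝ)..u, g s := funext hG
  have hxI : x ∈ Icc 0 x := right_mem_Icc.2 hx.1.le
  have hgx : ContinuousOn g (Icc 0 x) := hg.mono (Icc_subset_Icc_right hx.2)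
  have hpos : ∀ t ∈ Icc 0 x, 0 < g t := fun t ht =>
    hk.trans_le (hgk t ⟨ht.1, ht.2.trans hx.2⟩)
  have hcont : ContinuousOn (fun u => ∫ s in (0:ℝ)..u, g s) (Icc 0 x) := by
    rw [← uIcc_of_le hx.1.le] at hgx ⊢
    exact continuousOn_primitive_interval hgx.integrableOn_uIcc
  have hmono := strictMonoOn_integral_of_pos hgx hpos
  rw [one_div]
  exact tendsto_integral_exp_div_div_mul_exp_div hx.1 hcont
    (fun s hs => hmono (Ico_subset_Icc_self hs) hxI hs.2) (hpos x hxI)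
    (hasDerivWithinAt_integral_Iio_of_continuousOn hx.1 hgx)
end

section
/- Let H(p,x) = (1/2)(P+p)² + V(x) with V smooth and 1-periodic, and suppose v̂ : ℝ → ℝ is smooth and 1-periodic such that −(h/2)v̂''(x) + H(v̂'(x), x) ≤ Ĥ + E(h) for all x, where Ĥ is a constant and E(h) ≥ 0. If v_h is a 1-periodic C² solution of −(h/2)v_h'' + H(v_h', x) = H̄_h, then H̄_h ≤ Ĥ + E(h). -/
open Real

/-- At a global minimum of a differentiable function, the second derivative
(in `HasDerivAt` form) is nonnegative. -/
lemma second_deriv_nonneg_at_min (w : ℝ → ℝ) (x₀ w2 : ℝ)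
    (hdiff : Differentiable ℝ w)
    (hd2 : HasDerivAt (deriv w) w2 x₀)
    (hmin : ∀ x, w x₀ ≤ w x) : 0 ≤ w2 := by
  have hlm : IsLocalMin w x₀ := Filter.Eventually.of_forall hmin
  have hd0 : deriv w x₀ = 0 := hlm.deriv_eq_zero
  by_contra hneg
  push_neg at hneg
  have hslope := hasDerivAt_iff_tendsto_slope.mp hd2
  have hev : ∀ᶠ x in nhdsWithin x₀ {x₀}ᶜ, slope (deriv w) x₀ x < 0 :=
    hslope.eventually_lt_const hneg
  have hev' : ∀ᶠ x in nhdsWithin x₀ (Set.Ioi x₀), deriv w x < 0 := by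
    have := hev.filter_mono (nhdsWithin_mono x₀ (fun x hx => ne_of_gt hx))
    filter_upwards [this, self_mem_nhdsWithin] with x hx hx'
    have hx'' : (0:ℝ) < x - x₀ := sub_pos.mpr hx'
    have : slope (deriv w) x₀ x = deriv w x / (x - x₀) := by
      rw [slope_def_field, div_eq_div_iff (by linarith) (by linarith)]
      rw [hd0]; ring
    rw [this] at hx
    rcases div_neg_iff.mp hx with ⟨_, h2⟩ | ⟨h1, _⟩
    · linarith
    · exact h1
  rw [eventually_nhdsWithin_iff] at hev'
  obtain ⟨ε, hε, hball⟩ := Metric.eventually_nhds_iff.mp hev'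
  set b := x₀ + ε / 2 with hb
  have hx₀b : x₀ < b := by simp [hb]; linarith
  have hanti : StrictAntiOn w (Set.Icc x₀ b) := by
    apply strictAntiOn_of_deriv_neg (convex_Icc _ _) hdiff.continuous.continuousOn
    intro x hx
    rw [interior_Icc] at hx
    have hd : dist x x₀ < ε := by
      rw [Real.dist_eq, abs_of_pos (sub_pos.mpr hx.1)]
      have := hx.2; simp [hb] at this; linarith
    exact hball hd hx.1
  have : w b < w x₀ := hanti (Set.left_mem_Icc.mpr hx₀b.le)
    (Set.right_mem_Icc.mpr hx₀b.le) hx₀b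
  exact absurd (hmin b) (not_le.mpr this)

/-- comparison upper bound for the viscous effective Hamiltonian:
if v̂ is a smooth periodic subsolution up to error E ≥ 0, then H̄_h ≤ Ĥ + E. -/
theorem stmt14 (V : ℝ → ℝ) (hV : ContDiff ℝ (⊤ : ℕ∞) V) (hVper : Function.Periodic V 1)
    (P h Hhat E Hbarh : ℝ) (hh : 0 < h) (hE : 0 ≤ E)
    (vhat : ℝ → ℝ) (hvhat : ContDiff ℝ (⊤ : ℕ∞) vhat) (hvhatper : Function.Periodic vhat 1)
    (hsub : ∀ x, -(h/2) * deriv (deriv vhat) x + (1/2) * (P + deriv vhat x) ^ 2 + V x ≤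
      Hhat + E)
    (vh : ℝ → ℝ) (hvh : ContDiff ℝ 2 vh) (hvhper : Function.Periodic vh 1)
    (heq : ∀ x, -(h/2) * deriv (deriv vh) x + (1/2) * (P + deriv vh x) ^ 2 + V x = Hbarh) :
    Hbarh ≤ Hhat + E := by
  set w : ℝ → ℝ := fun x => vh x - vhat x with hw
  have hvhd : Differentiable ℝ vh := hvh.differentiable (by norm_num)
  have hvhatd : Differentiable ℝ vhat := hvhat.differentiable (by simp)
  have hwd : Differentiable ℝ w := hvhd.sub hvhatd
  have hwper : Function.Periodic w 1 := hvhper.sub hvhatper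
  -- global minimum of w
  obtain ⟨x₀, hx₀mem, hx₀min⟩ := isCompact_Icc.exists_isMinOn (Set.nonempty_Icc.mpr zero_le_one)
    (hwd.continuous.continuousOn (s := Set.Icc (0:ℝ) 1))
  have hmin : ∀ x, w x₀ ≤ w x := by
    intro x
    obtain ⟨y, hy, hyx⟩ := hwper.exists_mem_Ico₀ one_pos x
    calc w x₀ ≤ w y := hx₀min (Set.Ico_subset_Icc_self hy)
    _ = w x := hyx.symm
  -- first derivative vanishes at the minimum
  have hlm : IsLocalMin w x₀ := Filter.Eventually.of_forall hmin
  have hd0 : deriv w x₀ = 0 := hlm.deriv_eq_zero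
  have hderiv_eq : deriv w = fun x => deriv vh x - deriv vhat x := by
    funext x; exact deriv_sub (hvhd x) (hvhatd x)
  have hd0' : deriv vh x₀ = deriv vhat x₀ := by
    have := hd0; rw [hderiv_eq] at this; simpa [sub_eq_zero] using this
  -- second derivative nonneg at the minimum
  have key : ∀ f : ℝ → ℝ, ContDiff ℝ 2 f → ContDiff ℝ 1 (deriv f) := by
    intro f hf
    have : ContDiff ℝ (1+1 : ℕ) f := by exact_mod_cast hf
    exact ((contDiff_succ_iff_deriv (n := 1)).mp (by exact_mod_cast this)).2.2
  have hvh1 : ContDiff ℝ 1 (deriv vh) := key vh hvh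
  have hvhat1 : ContDiff ℝ 1 (deriv vhat) := key vhat (hvhat.of_le (by exact WithTop.coe_le_coe.mpr le_top))
  have hd2 : HasDerivAt (deriv w) (deriv (deriv vh) x₀ - deriv (deriv vhat) x₀) x₀ := by
    rw [hderiv_eq]
    exact ((hvh1.differentiable one_ne_zero x₀).hasDerivAt).sub
      ((hvhat1.differentiable one_ne_zero x₀).hasDerivAt)
  have h2nd : 0 ≤ deriv (deriv vh) x₀ - deriv (deriv vhat) x₀ :=
    second_deriv_nonneg_at_min w x₀ _ hwd hd2 hmin
  have h1 := heq x₀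
  have h2 := hsub x₀
  rw [hd0'] at h1
  nlinarith [hh.le]
end

section
/- Let H(p,x) = (1/2)(P+p)², so H is uniformly convex in p with H(q,x) − H(p,x) ≥ H_p(p,x)(q−p) + (1/2)(q−p)². Let v_h, v̂ be 1-periodic C² functions with −(h/2)v_h'' + H(v_h',x) + V(x) = H̄_h and −(h/2)v̂'' + H(v̂',x) + V(x) = Ĥ_h + O(h^{N+1}) uniformly, and |H̄_h − Ĥ_h| = O(h^{N+1}). Suppose σ is a 1-periodic C² probability density with 0 < k ≤ σ ≤ K satisfying (H_p(v̂'(x),x)·σ(x))' + h·σ''(x) = 0, so that ∫₀¹ (H_p(v̂',x)w' − (h/2)w'')σ dx = 0 for every 1-periodic C² function w. Then ∫₀¹ |v_h'(x) − v̂'(x)|² dx = O(h^{N+1}). -/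
open Real MeasureTheory intervalIntegral

/-- L² estimate for v_h' − v̂': using the uniform convexity of H in p and
the stationary density σ for the linearized operator, ∫₀¹|v_h' − v̂'|² = O(h^{N+1}). -/
theorem stmt16 (V : ℝ → ℝ) (hV : ContDiff ℝ (⊤ : ℕ∞) V) (hVper : Function.Periodic V 1)
    (P h Hbarh Hhath C₁ C₂ k K : ℝ) (N : ℕ)
    (hh : 0 < h) (hC₁ : 0 < C₁) (hC₂ : 0 < C₂) (hk : 0 < k)
    (vh vhat σ : ℝ → ℝ)
    (hvh : ContDiff ℝ 2 vh) (hvhper : Function.Periodic vh 1)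
    (hvhat : ContDiff ℝ 2 vhat) (hvhatper : Function.Periodic vhat 1)
    (heq : ∀ x, -(h/2) * deriv (deriv vh) x + (1/2) * (P + deriv vh x) ^ 2 + V x = Hbarh)
    (heqhat : ∀ x,
      |-(h/2) * deriv (deriv vhat) x + (1/2) * (P + deriv vhat x) ^ 2 + V x - Hhath| ≤
        C₁ * h ^ (N + 1))
    (hHH : |Hbarh - Hhath| ≤ C₂ * h ^ (N + 1))
    (hσ : ContDiff ℝ 2 σ) (hσper : Function.Periodic σ 1)
    (hσb : ∀ x, k ≤ σ x ∧ σ x ≤ K)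
    (hσprob : (∫ x in (0:ℝ)..1, σ x) = 1)
    (hstat : ∀ w : ℝ → ℝ, ContDiff ℝ 2 w → Function.Periodic w 1 →
      (∫ x in (0:ℝ)..1,
        ((P + deriv vhat x) * deriv w x - (h/2) * deriv (deriv w) x) * σ x) = 0) :
    (∫ x in (0:ℝ)..1, (deriv vh x - deriv vhat x) ^ 2) ≤
      (2 * (C₁ + C₂) / k) * h ^ (N + 1) := by
  -- regularity facts
  have h2 : ContDiff ℝ (1 + 1) vh := by norm_num; exact hvh
  have h2' : ContDiff ℝ (1 + 1) vhat := by norm_num; exact hvhat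
  have hdvh : ContDiff ℝ 1 (deriv vh) := (contDiff_succ_iff_deriv.mp h2).2.2
  have hdvhat : ContDiff ℝ 1 (deriv vhat) := (contDiff_succ_iff_deriv.mp h2').2.2
  have hvhd : Differentiable ℝ vh := hvh.differentiable (by norm_num)
  have hvhatd : Differentiable ℝ vhat := hvhat.differentiable (by norm_num)
  have hdvhd : Differentiable ℝ (deriv vh) := hdvh.differentiable (by norm_num)
  have hdvhatd : Differentiable ℝ (deriv vhat) := hdvhat.differentiable (by norm_num)
  have hcdvh : Continuous (deriv vh) := hdvh.continuous
  have hcdvhat : Continuous (deriv vhat) := hdvhat.continuous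
  have hcddvh : Continuous (deriv (deriv vh)) := hdvh.continuous_deriv le_rfl
  have hcddvhat : Continuous (deriv (deriv vhat)) := hdvhat.continuous_deriv le_rfl
  have hcσ : Continuous σ := hσ.continuous
  -- the difference w
  set w : ℝ → ℝ := fun x => vh x - vhat x with hw_def
  have hwc : ContDiff ℝ 2 w := hvh.sub hvhat
  have hwper : Function.Periodic w 1 := hvhper.sub hvhatper
  have hdw : deriv w = fun x => deriv vh x - deriv vhat x := by
    funext x
    exact deriv_sub (hvhd x) (hvhatd x)
  have hddw : ∀ x, deriv (deriv w) x = deriv (deriv vh) x - deriv (deriv vhat) x := by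
    intro x
    rw [hdw]
    exact deriv_sub (hdvhd x) (hdvhatd x)
  -- the stationarity identity
  have hA : (∫ x in (0:ℝ)..1,
      ((P + deriv vhat x) * (deriv vh x - deriv vhat x)
        - (h/2) * (deriv (deriv vh) x - deriv (deriv vhat) x)) * σ x) = 0 := by
    have hddw' : ∀ x, deriv (fun y => deriv vh y - deriv vhat y) x
        = deriv (deriv vh) x - deriv (deriv vhat) x :=
      fun x => deriv_sub (hdvhd x) (hdvhatd x)
    have := hstat w hwc hwper
    simp only [hdw, hddw'] at this
    exact this
  -- pointwise error bound
  have herr : ∀ x, (1/2) * (deriv vh x - deriv vhat x) ^ 2 * σ x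
      + ((P + deriv vhat x) * (deriv vh x - deriv vhat x)
        - (h/2) * (deriv (deriv vh) x - deriv (deriv vhat) x)) * σ x
      = (Hbarh - Hhath
          - (-(h/2) * deriv (deriv vhat) x + (1/2) * (P + deriv vhat x) ^ 2 + V x - Hhath))
        * σ x := by
    intro x
    linear_combination (σ x) * heq x
  -- integrability
  have hcont1 : Continuous fun x => (1/2) * (deriv vh x - deriv vhat x) ^ 2 * σ x := by
    fun_prop
  have hcont2 : Continuous fun x =>
      ((P + deriv vhat x) * (deriv vh x - deriv vhat x)
        - (h/2) * (deriv (deriv vh) x - deriv (deriv vhat) x)) * σ x := by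
    fun_prop
  have hcont3 : Continuous fun x =>
      (Hbarh - Hhath
        - (-(h/2) * deriv (deriv vhat) x + (1/2) * (P + deriv vhat x) ^ 2 + V x - Hhath))
      * σ x := by
    have hVc : Continuous V := hV.continuous
    fun_prop
  have hint1 : IntervalIntegrable _ volume 0 1 := hcont1.intervalIntegrable (0:ℝ) 1
  have hint2 : IntervalIntegrable _ volume 0 1 := hcont2.intervalIntegrable (0:ℝ) 1
  have hint3 : IntervalIntegrable _ volume 0 1 := hcont3.intervalIntegrable (0:ℝ) 1
  -- the main weighted bound
  have hmain : (∫ x in (0:ℝ)..1, (1/2) * (deriv vh x - deriv vhat x) ^ 2 * σ x)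
      ≤ (C₁ + C₂) * h ^ (N + 1) := by
    have hsum : (∫ x in (0:ℝ)..1, (1/2) * (deriv vh x - deriv vhat x) ^ 2 * σ x)
        = ∫ x in (0:ℝ)..1,
          (Hbarh - Hhath
            - (-(h/2) * deriv (deriv vhat) x + (1/2) * (P + deriv vhat x) ^ 2 + V x - Hhath))
          * σ x := by
      have hadd := intervalIntegral.integral_add hint1 hint2
      have hcongr : (∫ x in (0:ℝ)..1,
          ((1/2) * (deriv vh x - deriv vhat x) ^ 2 * σ x
            + ((P + deriv vhat x) * (deriv vh x - deriv vhat x)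
              - (h/2) * (deriv (deriv vh) x - deriv (deriv vhat) x)) * σ x))
          = ∫ x in (0:ℝ)..1,
            (Hbarh - Hhath
              - (-(h/2) * deriv (deriv vhat) x + (1/2) * (P + deriv vhat x) ^ 2 + V x - Hhath))
            * σ x :=
        intervalIntegral.integral_congr (fun x _ => herr x)
      rw [hadd, hA, add_zero] at hcongr
      exact hcongr
    rw [hsum]
    have hbound : (∫ x in (0:ℝ)..1,
        (Hbarh - Hhath
          - (-(h/2) * deriv (deriv vhat) x + (1/2) * (P + deriv vhat x) ^ 2 + V x - Hhath))
        * σ x) ≤ ∫ x in (0:ℝ)..1, ((C₁ + C₂) * h ^ (N + 1)) * σ x := by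
      apply intervalIntegral.integral_mono_on (by norm_num) hint3
      · exact (continuous_const.mul hcσ).intervalIntegrable 0 1
      · intro x _
        have hσx : 0 ≤ σ x := le_trans hk.le (hσb x).1
        apply mul_le_mul_of_nonneg_right _ hσx
        have h1 := heqhat x
        have h2 := hHH
        have := abs_le.mp h1
        have := abs_le.mp h2
        linarith [this.1, this.2, (abs_le.mp h1).1, (abs_le.mp h1).2]
    calc _ ≤ ∫ x in (0:ℝ)..1, ((C₁ + C₂) * h ^ (N + 1)) * σ x := hbound
      _ = (C₁ + C₂) * h ^ (N + 1) := by
          rw [intervalIntegral.integral_const_mul, hσprob, mul_one]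
  -- drop the weight
  have hdrop : k * (∫ x in (0:ℝ)..1, (deriv vh x - deriv vhat x) ^ 2)
      ≤ ∫ x in (0:ℝ)..1, (deriv vh x - deriv vhat x) ^ 2 * σ x := by
    rw [← intervalIntegral.integral_const_mul]
    apply intervalIntegral.integral_mono_on (by norm_num)
    · exact (continuous_const.mul (by fun_prop)).intervalIntegrable 0 1
    · exact (Continuous.mul (by fun_prop) hcσ).intervalIntegrable 0 1
    · intro x _
      have := (hσb x).1
      nlinarith [sq_nonneg (deriv vh x - deriv vhat x)]
  have hhalf : (∫ x in (0:ℝ)..1, (deriv vh x - deriv vhat x) ^ 2 * σ x)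
      = 2 * ∫ x in (0:ℝ)..1, (1/2) * (deriv vh x - deriv vhat x) ^ 2 * σ x := by
    rw [← intervalIntegral.integral_const_mul]
    apply intervalIntegral.integral_congr
    intro x _
    ring
  have : k * (∫ x in (0:ℝ)..1, (deriv vh x - deriv vhat x) ^ 2)
      ≤ 2 * ((C₁ + C₂) * h ^ (N + 1)) := by
    calc k * _ ≤ _ := hdrop
      _ = 2 * ∫ x in (0:ℝ)..1, (1/2) * (deriv vh x - deriv vhat x) ^ 2 * σ x := hhalf
      _ ≤ 2 * ((C₁ + C₂) * h ^ (N + 1)) := by linarith [hmain]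
  rw [div_mul_eq_mul_div, le_div_iff₀ hk]
  linarith [this]
end
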